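/- arXiv:1510.03018 — 4 statements merged into one kernel-verified Lean document; each statement's English description precedes it below -/
import Mathlib

section
/- Let V be a finite-dimensional vector space over a field k, W = V ⊕ V∨, and T ⊆ W a linear subspace with dim T = dim V. Set V₁ = V ∩ T (intersecting inside W, identifying V with V ⊕ 0). Then there exists a direct sum decomposition V = V₁ ⊕ V₂ with the property: for every non-degenerate bilinear form A₁ : V₁ → V₁∨, extending it by zero to A = A₁ ⊕ 0 : V → V∨ = V₁∨ ⊕ V₂∨, the graph Γ = {(v, A v) : v ∈ V} ⊆ W satisfies Γ ∩ T = 0. -/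
open Module Submodule

private lemma exists_notMem_notMem {k V : Type*} [Field k] [AddCommGroup V] [Module k V]
    {p q : Submodule k V} (hp : p ≠ ⊤) (hq : q ≠ ⊤) : ∃ x, x ∉ p ∧ x ∉ q := by
  obtain ⟨x, hx⟩ := not_forall.mp (hp ∘ Submodule.eq_top_iff'.mpr)
  obtain ⟨y, hy⟩ := not_forall.mp (hq ∘ Submodule.eq_top_iff'.mpr)
  by_cases hxq : x ∈ q
  · by_cases hyp : y ∈ p
    · refine ⟨x + y, fun h => hx ?_, fun h => hy ?_⟩
      · simpa using p.sub_mem h hyp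
      · simpa using q.sub_mem h hxq
    · exact ⟨y, hyp, hy⟩
  · exact ⟨x, hx, hxq⟩

private lemma common_compl_aux {k V : Type*} [Field k] [AddCommGroup V] [Module k V]
    [FiniteDimensional k V] :
    ∀ (m : ℕ) (p q : Submodule k V), Module.finrank k p = Module.finrank k q →
      Module.finrank k p + m = Module.finrank k V →
      ∃ C : Submodule k V, Module.finrank k C = m ∧ p ⊓ C = ⊥ ∧ q ⊓ C = ⊥ := by
  intro m
  induction m with
  | zero =>
    intro p q _ _
    exact ⟨⊥, finrank_bot k V, by simp, by simp⟩
  | succ m ih =>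
    intro p q hpq hdim
    have hp : p ≠ ⊤ := by
      intro h
      rw [h, finrank_top] at hdim
      omega
    have hq : q ≠ ⊤ := by
      intro h
      rw [h, finrank_top] at hpq
      omega
    obtain ⟨x, hxp, hxq⟩ := exists_notMem_notMem hp hq
    have hx0 : x ≠ 0 := fun h => hxp (h ▸ p.zero_mem)
    have hspan : Module.finrank k (k ∙ x) = 1 := finrank_span_singleton hx0
    have hdisj : ∀ (r : Submodule k V), x ∉ r → r ⊓ (k ∙ x) = ⊥ := by
      intro r hxr
      rw [eq_bot_iff]
      rintro y ⟨hy1, hy2⟩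
      obtain ⟨a, rfl⟩ := mem_span_singleton.mp hy2
      rcases eq_or_ne a 0 with rfl | ha
      · simp
      · exact absurd (by simpa [smul_smul, inv_mul_cancel₀ ha] using r.smul_mem a⁻¹ hy1) hxr
    have hfp : Module.finrank k ↥(p ⊔ k ∙ x) = Module.finrank k p + 1 := by
      have := Submodule.finrank_sup_add_finrank_inf_eq p (k ∙ x)
      rw [hdisj p hxp, finrank_bot, hspan] at this
      omega
    have hfq : Module.finrank k ↥(q ⊔ k ∙ x) = Module.finrank k q + 1 := by
      have := Submodule.finrank_sup_add_finrank_inf_eq q (k ∙ x)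
      rw [hdisj q hxq, finrank_bot, hspan] at this
      omega
    obtain ⟨C, hC, hpC, hqC⟩ := ih (p ⊔ k ∙ x) (q ⊔ k ∙ x)
      (by rw [hfp, hfq, hpq]) (by omega)
    have hxC : x ∉ C := by
      intro h
      have : x ∈ (p ⊔ k ∙ x) ⊓ C :=
        ⟨Submodule.mem_sup_right (mem_span_singleton_self x), h⟩
      rw [hpC] at this
      exact hx0 this
    have key : ∀ (r : Submodule k V), x ∉ r → (r ⊔ k ∙ x) ⊓ C = ⊥ →
        r ⊓ (C ⊔ k ∙ x) = ⊥ := by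
      intro r hxr hrC
      rw [eq_bot_iff]
      rintro y ⟨hy1, hy2⟩
      obtain ⟨c, hc, z, hz, rfl⟩ := mem_sup.mp hy2
      obtain ⟨a, rfl⟩ := mem_span_singleton.mp hz
      have hcr : c ∈ (r ⊔ k ∙ x) ⊓ C := by
        refine ⟨?_, hc⟩
        have hc2 : c = (c + a • x) - a • x := by abel
        rw [hc2]
        exact Submodule.sub_mem _ (Submodule.mem_sup_left hy1)
          (Submodule.mem_sup_right (smul_mem _ a (mem_span_singleton_self x)))
      rw [hrC] at hcr
      rw [hcr, zero_add] at hy1 ⊢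
      rcases eq_or_ne a 0 with rfl | ha
      · simp
      · exact absurd (by simpa [smul_smul, inv_mul_cancel₀ ha] using r.smul_mem a⁻¹ hy1) hxr
    refine ⟨C ⊔ k ∙ x, ?_, key p hxp hpC, key q hxq hqC⟩
    have h2 := Submodule.finrank_sup_add_finrank_inf_eq C (k ∙ x)
    rw [hdisj C hxC, finrank_bot, hspan, hC] at h2
    omega

private def prodEquivAux {k M N : Type*} [Field k] [AddCommGroup M] [AddCommGroup N]
    [Module k M] [Module k N] (p : Submodule k M) (q : Submodule k N) :
    ↥(p.prod q) ≃ₗ[k] ↥p × ↥q where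
  toFun x := (⟨x.1.1, x.2.1⟩, ⟨x.1.2, x.2.2⟩)
  map_add' _ _ := rfl
  map_smul' _ _ := rfl
  invFun y := ⟨(y.1.1, y.2.1), ⟨y.1.2, y.2.2⟩⟩
  left_inv _ := rfl
  right_inv _ := rfl

private lemma prod_finrank {k M N : Type*} [Field k] [AddCommGroup M] [AddCommGroup N]
    [Module k M] [Module k N] [FiniteDimensional k M] [FiniteDimensional k N]
    (p : Submodule k M) (q : Submodule k N) :
    Module.finrank k ↥(p.prod q) = Module.finrank k ↥p + Module.finrank k ↥q := by
  rw [LinearEquiv.finrank_eq (prodEquivAux p q), Module.finrank_prod]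

/-- Beilinson's linear algebra lemma: for `W = V ⊕ V∨`, `T ⊆ W` with `dim T = dim V`
and `V₁ = V ∩ T`, there is a complement `V₂` of `V₁` in `V` such that for every
`A : V → V∨` which is of the form `A₁ ⊕ 0` with `A₁` non-degenerate on `V₁`, the
graph of `A` meets `T` trivially. -/
theorem stmt3 {k V : Type*} [Field k] [AddCommGroup V] [Module k V] [FiniteDimensional k V]
    (T : Submodule k (V × Module.Dual k V))
    (hT : Module.finrank k ↥T = Module.finrank k V)
    (V₁ : Submodule k V)
    (hV₁ : V₁ = Submodule.comap (LinearMap.inl k V (Module.Dual k V)) T) :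
    ∃ V₂ : Submodule k V, IsCompl V₁ V₂ ∧
      ∀ A : V →ₗ[k] Module.Dual k V,
        (∀ v ∈ V₂, A v = 0) →
        (∀ v ∈ V₁, ∀ w ∈ V₂, A v w = 0) →
        (∀ v ∈ V₁, (∀ w ∈ V₁, A v w = 0) → v = 0) →
        ∀ v : V, (v, A v) ∈ T → v = 0 := by
  classical
  have hmem : ∀ v : V, v ∈ V₁ ↔ (v, (0 : Module.Dual k V)) ∈ T := by
    intro v
    rw [hV₁, Submodule.mem_comap, LinearMap.inl_apply]
  set Q : Submodule k (Module.Dual k V) :=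
    T.map (LinearMap.snd k V (Module.Dual k V)) with hQdef
  have hQrank : Module.finrank k Q + Module.finrank k V₁ = Module.finrank k V := by
    have hsup := Submodule.finrank_sup_add_finrank_inf_eq T
      ((⊤ : Submodule k V).prod (⊥ : Submodule k (Module.Dual k V)))
    have heq1 : T ⊔ (⊤ : Submodule k V).prod (⊥ : Submodule k (Module.Dual k V))
        = (⊤ : Submodule k V).prod Q := by
      apply le_antisymm
      · refine sup_le (fun x hx => ?_) (Submodule.prod_mono le_rfl bot_le)
        exact ⟨Submodule.mem_top, Submodule.mem_map_of_mem hx⟩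
      · rintro ⟨v, φ⟩ ⟨-, hφ⟩
        obtain ⟨⟨u, ψ⟩, hw, rfl⟩ := Submodule.mem_map.mp hφ
        refine Submodule.mem_sup.mpr ⟨(u, ψ), hw, (v - u, 0), ⟨Submodule.mem_top, rfl⟩, ?_⟩
        simp
    have heq2 : T ⊓ (⊤ : Submodule k V).prod (⊥ : Submodule k (Module.Dual k V))
        = V₁.prod (⊥ : Submodule k (Module.Dual k V)) := by
      ext ⟨v, φ⟩
      simp only [Submodule.mem_inf, Submodule.mem_prod, Submodule.mem_top, true_and,
        Submodule.mem_bot]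
      constructor
      · rintro ⟨hvT, rfl⟩
        exact ⟨(hmem v).mpr hvT, rfl⟩
      · rintro ⟨hv, rfl⟩
        exact ⟨(hmem v).mp hv, rfl⟩
    rw [heq1, heq2, prod_finrank, prod_finrank, prod_finrank, hT] at hsup
    have hb : Module.finrank k (⊥ : Submodule k (Module.Dual k V)) = 0 := finrank_bot k _
    have ht : Module.finrank k (⊤ : Submodule k V) = Module.finrank k V := finrank_top k V
    omega
  have hannrank : Module.finrank k V₁.dualAnnihilator + Module.finrank k V₁
      = Module.finrank k V := by
    have := Subspace.finrank_add_finrank_dualCoannihilator_eq V₁.dualAnnihilator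
    rwa [Subspace.dualAnnihilator_dualCoannihilator_eq] at this
  -- common complement of Q and dualAnnihilator V₁
  have hdual : Module.finrank k (Module.Dual k V) = Module.finrank k V :=
    Subspace.dual_finrank_eq
  obtain ⟨R, hRrank, hannR, hQR⟩ := common_compl_aux (Module.finrank k V₁)
    V₁.dualAnnihilator Q (by omega) (by omega)
  refine ⟨R.dualCoannihilator, ?_, ?_⟩
  · -- IsCompl V₁ R.dualCoannihilator
    have hdisj : Disjoint V₁ R.dualCoannihilator := by
      rw [disjoint_iff, eq_bot_iff]
      rintro v ⟨hv1, hv2⟩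
      rw [Submodule.mem_bot, ← Module.forall_dual_apply_eq_zero_iff k]
      intro φ
      have hsup : V₁.dualAnnihilator ⊔ R = ⊤ :=
        Submodule.eq_top_of_disjoint _ _ (by omega) (disjoint_iff.mpr hannR)
      have : φ ∈ V₁.dualAnnihilator ⊔ R := hsup ▸ Submodule.mem_top
      obtain ⟨φ₁, h₁, φ₂, h₂, rfl⟩ := Submodule.mem_sup.mp this
      rw [LinearMap.add_apply, (Submodule.mem_dualAnnihilator φ₁).mp h₁ v hv1,
        (Submodule.mem_dualCoannihilator v).mp hv2 φ₂ h₂, add_zero]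
    have hV₂rank : Module.finrank k R.dualCoannihilator + Module.finrank k V₁
        = Module.finrank k V := by
      have := Subspace.finrank_add_finrank_dualCoannihilator_eq R
      omega
    refine ⟨hdisj, codisjoint_iff.mpr ?_⟩
    exact Submodule.eq_top_of_disjoint _ _ (by omega) hdisj
  · intro A h1 h2 h3 v hvT
    have hAvQ : A v ∈ Q := Submodule.mem_map_of_mem hvT
    have hAvR : A v ∈ R := by
      have hRR : R.dualCoannihilator.dualAnnihilator = R :=
        Subspace.dualCoannihilator_dualAnnihilator_eq
      rw [← hRR, Submodule.mem_dualAnnihilator (A v)]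
      intro w hw
      have hsup : V₁ ⊔ R.dualCoannihilator = ⊤ := by
        have hdisj : Disjoint V₁ R.dualCoannihilator := by
          rw [disjoint_iff, eq_bot_iff]
          rintro u ⟨hu1, hu2⟩
          rw [Submodule.mem_bot, ← Module.forall_dual_apply_eq_zero_iff k]
          intro φ
          have hsup2 : V₁.dualAnnihilator ⊔ R = ⊤ :=
            Submodule.eq_top_of_disjoint _ _ (by omega) (disjoint_iff.mpr hannR)
          have : φ ∈ V₁.dualAnnihilator ⊔ R := hsup2 ▸ Submodule.mem_top
          obtain ⟨φ₁, hφ₁, φ₂, hφ₂, rfl⟩ := Submodule.mem_sup.mp this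
          rw [LinearMap.add_apply, (Submodule.mem_dualAnnihilator φ₁).mp hφ₁ u hu1,
            (Submodule.mem_dualCoannihilator u).mp hu2 φ₂ hφ₂, add_zero]
        have hV₂rank : Module.finrank k R.dualCoannihilator + Module.finrank k V₁
            = Module.finrank k V := by
          have := Subspace.finrank_add_finrank_dualCoannihilator_eq R
          omega
        exact Submodule.eq_top_of_disjoint _ _ (by omega) hdisj
      have : v ∈ V₁ ⊔ R.dualCoannihilator := hsup ▸ Submodule.mem_top
      obtain ⟨v₁, hv₁, v₂, hv₂, rfl⟩ := Submodule.mem_sup.mp this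
      rw [map_add, LinearMap.add_apply, h2 v₁ hv₁ w hw, h1 v₂ hv₂,
        LinearMap.zero_apply, add_zero]
    have hAv0 : A v = 0 := by
      have : A v ∈ Q ⊓ R := ⟨hAvQ, hAvR⟩
      rw [hQR] at this
      exact this
    rw [hAv0] at hvT
    refine h3 v ((hmem v).mpr hvT) fun w _ => ?_
    rw [hAv0, LinearMap.zero_apply]
end

section
/- Let V₁, V₂ be subspaces of a finite-dimensional vector space V with V = V₁ ⊕ V₂, and let T ⊆ V ⊕ V∨ be a subspace with dim T = dim V, V₁ = V ∩ T, and V₂ ∩ T̄^⊥ = 0 where T̄ is the image of T in V∨. Then V₁∨ + T̄ = V∨, where V₁∨ is identified with the annihilator of V₂ in V∨. -/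
/-- If `V = V₁ ⊕ V₂`, `T ⊆ V ⊕ V∨` with `dim T = dim V`, `V₁ = V ∩ T` and
`V₂ ∩ T̄^⊥ = 0` (where `T̄` is the image of `T` in `V∨`), then `V₁∨ + T̄ = V∨`,
identifying `V₁∨` with the annihilator of `V₂` in `V∨`. -/
theorem stmt5 {k V : Type*} [Field k] [AddCommGroup V] [Module k V] [FiniteDimensional k V]
    (V₁ V₂ : Submodule k V) (hcompl : IsCompl V₁ V₂)
    (T : Submodule k (V × Module.Dual k V))
    (hT : Module.finrank k ↥T = Module.finrank k V)
    (hV₁ : V₁ = Submodule.comap (LinearMap.inl k V (Module.Dual k V)) T)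
    (hV₂ : V₂ ⊓ (Submodule.map (LinearMap.snd k V (Module.Dual k V)) T).dualCoannihilator
      = ⊥) :
    V₂.dualAnnihilator ⊔ Submodule.map (LinearMap.snd k V (Module.Dual k V)) T = ⊤ := by
  set W := V₂.dualAnnihilator ⊔ Submodule.map (LinearMap.snd k V (Module.Dual k V)) T with hW
  have hco : W.dualCoannihilator = ⊥ := by
    rw [hW, Submodule.dualCoannihilator_sup_eq,
      Subspace.dualAnnihilator_dualCoannihilator_eq, hV₂]
  have := Subspace.finrank_add_finrank_dualCoannihilator_eq W
  rw [hco, finrank_bot, add_zero] at this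
  exact Submodule.eq_top_of_finrank_eq (this.trans Subspace.dual_finrank_eq.symm)
end

section
/- Let E be a vector bundle of rank n+1 over a scheme X of finite type over a field, F ⊆ E a sub-vector bundle, and C ⊆ E a closed conical subset (stable under scaling). Then the following are equivalent: (1) the intersection of C with F (the inverse image of the zero section of E/F under E → E/F) is contained in the zero section of E; (2) the restriction of the projection E → E/F to C is a finite morphism. -/
open DirectSum Pointwise

section aux

variable {R A : Type*} [CommRing R] [CommRing A] [Algebra R A]
  (𝒜 : ℕ → Submodule R A) [GradedAlgebra 𝒜]

/-- Powers of the degree-one part land in the corresponding graded piece. -/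
theorem aux_pow_le (n : ℕ) : (𝒜 1) ^ n ≤ 𝒜 n := by
  induction n with
  | zero =>
    rw [pow_zero]
    exact Submodule.one_le.2 (SetLike.one_mem_graded 𝒜)
  | succ n ih =>
    rw [pow_succ]
    exact Submodule.mul_le.2 fun x hx y hy => SetLike.mul_mem_graded (ih hx) hy

/-- If the algebra is generated in degree one, each graded piece is the corresponding
power of the degree-one part. -/
theorem aux_le_pow (hgen : Algebra.adjoin R (𝒜 1 : Set A) = ⊤) (n : ℕ) :
    𝒜 n ≤ (𝒜 1) ^ n := by
  classical
  intro x hx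
  have hx' : x ∈ ⨆ j : ℕ, (𝒜 1) ^ j := by
    have hmem : x ∈ Subalgebra.toSubmodule (Algebra.adjoin R (𝒜 1 : Set A)) := by
      rw [hgen]; trivial
    rw [Algebra.adjoin_eq_span] at hmem
    refine Submodule.span_le.2 ?_ hmem
    intro y hy
    induction hy using Submonoid.closure_induction with
    | mem z hz =>
      exact Submodule.mem_iSup_of_mem 1 (by rwa [pow_one])
    | one =>
      exact Submodule.mem_iSup_of_mem 0 (by rw [pow_zero]; exact Submodule.one_le.1 le_rfl)
    | mul z w hz hw hz' hw' =>
      have : (⨆ j : ℕ, (𝒜 1) ^ j) * (⨆ j : ℕ, (𝒜 1) ^ j) ≤ ⨆ j : ℕ, (𝒜 1) ^ j := by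
        rw [Submodule.iSup_mul]
        refine iSup_le fun i => ?_
        rw [Submodule.mul_iSup]
        refine iSup_le fun j => ?_
        rw [← pow_add]
        exact le_iSup (fun j : ℕ => (𝒜 1) ^ j) (i + j)
      exact this (Submodule.mul_mem_mul hz' hw')
  rw [Submodule.mem_iSup_iff_exists_finsupp] at hx'
  obtain ⟨f, hf, hsum⟩ := hx'
  have hx2 : x = GradedRing.proj 𝒜 n x := by
    rw [GradedRing.proj_apply, DirectSum.decompose_of_mem_same 𝒜 hx]
  have hterm : ∀ j, GradedRing.proj 𝒜 n (f j) = if j = n then f j else 0 := by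
    intro j
    have hj : f j ∈ 𝒜 j := aux_pow_le 𝒜 j (hf j)
    by_cases hjn : j = n
    · subst hjn
      rw [if_pos rfl, GradedRing.proj_apply, DirectSum.decompose_of_mem_same 𝒜 hj]
    · rw [if_neg hjn, GradedRing.proj_apply, DirectSum.decompose_of_mem_ne 𝒜 hj hjn]
  have hxf : x = f n := by
    conv_lhs => rw [hx2, ← hsum]
    rw [Finsupp.sum, map_sum]
    simp_rw [hterm]
    rw [Finset.sum_ite_eq' f.support n _]
    split_ifs with hn
    · rfl
    · exact (Finsupp.notMem_support_iff.1 hn).symm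
  rw [hxf]
  exact hf n

/-- A homogeneous element of degree `n ≥ 1` of the ideal generated by a set of degree-one
elements lies in `𝒜 (n-1) * N`. -/
theorem aux_span_cap_grade (N : Submodule R A) (hN : N ≤ 𝒜 1) {n : ℕ} (hn : 1 ≤ n)
    {x : A} (hxI : x ∈ Ideal.span (N : Set A)) (hx : x ∈ 𝒜 n) :
    x ∈ (𝒜 (n - 1)) * N := by
  classical
  rw [Ideal.span, Submodule.mem_span_set] at hxI
  obtain ⟨c, hsupp, hsum⟩ := hxI
  have hx2 : x = GradedRing.proj 𝒜 n x := by
    rw [GradedRing.proj_apply, DirectSum.decompose_of_mem_same 𝒜 hx]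
  rw [hx2, ← hsum, Finsupp.sum, map_sum]
  refine Submodule.sum_mem _ fun ν hν => ?_
  have hνN : ν ∈ N := hsupp hν
  have hν1 : ν ∈ 𝒜 1 := hN hνN
  rw [smul_eq_mul, GradedRing.proj_apply,
    DirectSum.coe_decompose_mul_of_right_mem_of_le 𝒜 hν1 hn]
  exact Submodule.mul_mem_mul (SetLike.coe_mem _) hνN

end aux

/-- Algebraic form of Beilinson's Lemma 1.2(ii): let `A` be an ℕ-graded `R`-algebra
generated in degree 1 (the coordinate ring of a closed conical subset `C` of a vector
bundle `E` over `X = Spec R`), `R` noetherian, `𝒜 1` a finitely generated `R`-module,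
and `N ⊆ 𝒜 1` an `R`-submodule (the image of `(E/F)∨`). Then the following are
equivalent: (1) every degree-one element is nilpotent modulo the ideal generated by `N`
(i.e. `C ∩ F` is contained in the zero section); (2) `A` is a finite module over the
subalgebra generated by `N` (i.e. the restriction of `E → E/F` to `C` is finite). -/
theorem stmt11 {R A : Type*} [CommRing R] [IsNoetherianRing R] [CommRing A] [Algebra R A]
    (𝒜 : ℕ → Submodule R A) [GradedAlgebra 𝒜]
    (hgen : Algebra.adjoin R (𝒜 1 : Set A) = ⊤)
    (hfg : (𝒜 1).FG)
    (N : Submodule R A) (hN : N ≤ 𝒜 1) :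
    (∀ a ∈ 𝒜 1, a ∈ (Ideal.span (N : Set A)).radical) ↔
      Module.Finite ↥(Algebra.adjoin R (N : Set A)) A := by
  classical
  set I : Ideal A := Ideal.span (N : Set A) with hI
  set B : Subalgebra R A := Algebra.adjoin R (N : Set A) with hB
  constructor
  · -- forward direction
    intro h
    obtain ⟨s, hs⟩ := id hfg
    -- nilpotency exponents
    have hpows : ∀ a ∈ s, ∃ k : ℕ, a ^ k ∈ I := by
      intro a ha
      have ha1 : a ∈ 𝒜 1 := by
        rw [← hs]; exact Submodule.subset_span ha
      exact h a ha1
    let F : A → ℕ := fun a => if ha : a ∈ s then (hpows a ha).choose else 0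
    have hF : ∀ a ∈ s, a ^ F a ∈ I := by
      intro a ha
      simp only [F, dif_pos ha]
      exact (hpows a ha).choose_spec
    set D : ℕ := ∑ a ∈ s, F a with hD
    -- large powers of the degree-one part are in I
    have hbig : ∀ n : ℕ, D + 1 ≤ n → ∀ x ∈ ((s : Set A)) ^ n, x ∈ I := by
      intro n hn x hx
      rw [Set.mem_pow] at hx
      obtain ⟨g, hg⟩ := hx
      have hgprod : ∏ i : Fin n, (g i : A) = x := by
        rw [← hg, List.prod_ofFn]
      have hcount : (Finset.univ : Finset (Fin n)).card =
          ∑ a ∈ s, (Finset.univ.filter fun i : Fin n => (g i : A) = a).card :=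
        Finset.card_eq_sum_card_fiberwise fun i _ => (g i).2
      have hpigeon : ∃ a ∈ s, F a ≤ (Finset.univ.filter fun i : Fin n => (g i : A) = a).card := by
        by_contra hcon
        push_neg at hcon
        have hle : ∀ a ∈ s, (Finset.univ.filter fun i : Fin n => (g i : A) = a).card + 1 ≤ F a :=
          fun a ha => hcon a ha
        have : n + s.card ≤ D := by
          calc n + s.card
              = ∑ a ∈ s, ((Finset.univ.filter fun i : Fin n => (g i : A) = a).card + 1) := by
                rw [Finset.sum_add_distrib, ← hcount, Finset.card_univ, Fintype.card_fin,
                  Finset.sum_const, smul_eq_mul, mul_one]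
            _ ≤ ∑ a ∈ s, F a := Finset.sum_le_sum hle
            _ = D := rfl
        omega
      obtain ⟨a, ha, hcard⟩ := hpigeon
      set T : Finset (Fin n) := Finset.univ.filter fun i : Fin n => (g i : A) = a with hT
      have hsplit : x = (∏ i ∈ T, (g i : A)) * ∏ i ∈ Finset.univ.filter
          (fun i : Fin n => ¬((g i : A) = a)), (g i : A) := by
        rw [← hgprod, Finset.prod_filter_mul_prod_filter_not]
      have hTa : (∏ i ∈ T, (g i : A)) = a ^ T.card := by
        rw [Finset.prod_congr rfl fun i hi => (Finset.mem_filter.1 hi).2, Finset.prod_const]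
      have hpow : a ^ T.card = a ^ F a * a ^ (T.card - F a) := by
        rw [← pow_add, Nat.add_sub_cancel' hcard]
      rw [hsplit, hTa, hpow, mul_assoc]
      exact Ideal.mul_mem_right _ _ (hF a ha)
    -- the generating finite set
    set M₀ : Submodule R A := ∑ j ∈ Finset.range (D + 1), (𝒜 1) ^ j with hM₀
    have hM₀fg : M₀.FG := by
      rw [hM₀]
      refine Finset.sum_induction _ Submodule.FG (fun p q hp hq => ?_) ?_ fun j _ => hfg.pow j
      · rw [Submodule.add_eq_sup]; exact hp.sup hq
      · exact ⟨∅, by simp⟩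
    obtain ⟨t, ht⟩ := hM₀fg
    -- the B-span of t
    set P : Submodule B A := Submodule.span B (t : Set A) with hP
    have htP : ∀ x ∈ M₀, x ∈ P := by
      intro x hx
      rw [← ht] at hx
      have : Submodule.span R (t : Set A) ≤ P.restrictScalars R :=
        Submodule.span_le.2 fun y hy => Submodule.subset_span hy
      exact this hx
    have hpowM₀ : ∀ j : ℕ, j ≤ D → (𝒜 1) ^ j ≤ M₀ := by
      intro j hj
      rw [hM₀]
      exact Finset.single_le_sum (f := fun j => (𝒜 1) ^ j) (fun _ _ => bot_le)
        (Finset.mem_range.2 (Nat.lt_succ_of_le hj))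
    -- main induction: every graded piece is in P
    have key : ∀ n : ℕ, ∀ x ∈ 𝒜 n, x ∈ P := by
      intro n
      induction n using Nat.strong_induction_on with
      | _ n ih =>
        intro x hx
        rcases le_or_gt n D with hnD | hnD
        · exact htP x (hpowM₀ n hnD (aux_le_pow 𝒜 hgen n hx))
        · -- n ≥ D + 1
          have hn1 : 1 ≤ n := le_trans (Nat.le_add_left 1 D) hnD
          have hxI : x ∈ I := by
            have hxpow : x ∈ (𝒜 1) ^ n := aux_le_pow 𝒜 hgen n hx
            have : (𝒜 1) ^ n = Submodule.span R ((s : Set A) ^ n) := by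
              rw [← hs, Submodule.span_pow]
            rw [this] at hxpow
            have hsub : Submodule.span R ((s : Set A) ^ n) ≤ I.restrictScalars R :=
              Submodule.span_le.2 fun y hy => hbig n hnD y hy
            exact hsub hxpow
          have hxmul : x ∈ (𝒜 (n - 1)) * N := aux_span_cap_grade 𝒜 N hN hn1 hxI hx
          have : (𝒜 (n - 1)) * N ≤ P.restrictScalars R := by
            refine Submodule.mul_le.2 fun y hy ν hν => ?_
            have hyP : y ∈ P := ih (n - 1) (by omega) y hy
            have hνB : ν ∈ B := Algebra.subset_adjoin hν
            have : (⟨ν, hνB⟩ : B) • y ∈ P := Submodule.smul_mem P _ hyP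
            simpa [Algebra.smul_def, mul_comm] using this
          exact this hxmul
    -- conclude finiteness
    refine ⟨⟨t, ?_⟩⟩
    rw [eq_top_iff]
    intro x _
    rw [← DirectSum.sum_support_decompose 𝒜 x]
    exact Submodule.sum_mem _ fun i _ => key i _ (SetLike.coe_mem _)
  · -- reverse direction
    intro hfin
    intro a ha
    have hint : IsIntegral B a := IsIntegral.of_finite B a
    obtain ⟨p, hmonic, hp⟩ := hint
    set n : ℕ := p.natDegree with hn
    -- every element of B is congruent to a scalar mod I
    have habove : ∀ b : B, ∃ r : R, (b : A) - algebraMap R A r ∈ I := by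
      rintro ⟨b, hb⟩
      induction hb using Algebra.adjoin_induction with
      | mem z hz =>
        exact ⟨0, by simpa using Ideal.subset_span hz⟩
      | algebraMap r => exact ⟨r, by simp⟩
      | add z w hz hw hz' hw' =>
        obtain ⟨r, hr⟩ := hz'
        obtain ⟨r', hr'⟩ := hw'
        exact ⟨r + r', by rw [map_add]; convert I.add_mem hr hr' using 1; ring⟩
      | mul z w hz hw hz' hw' =>
        obtain ⟨r, hr⟩ := hz'
        obtain ⟨r', hr'⟩ := hw'
        refine ⟨r * r', ?_⟩
        have : z * w - algebraMap R A r * algebraMap R A r' =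
            (z - algebraMap R A r) * w + algebraMap R A r * (w - algebraMap R A r') := by ring
        rw [map_mul, this]
        exact I.add_mem (I.mul_mem_right _ hr) (I.mul_mem_left _ hr')
    choose r hr using habove
    -- the element y
    set y : A := ∑ i ∈ Finset.range (n + 1), algebraMap R A (r (p.coeff i)) * a ^ i with hy
    have haeval : ∑ i ∈ Finset.range (n + 1), ((p.coeff i : A) * a ^ i) = 0 := by
      have h0 : (0 : A) = ∑ i ∈ Finset.range (p.natDegree + 1), p.coeff i • a ^ i := by
        rw [← Polynomial.aeval_eq_sum_range, Polynomial.aeval_def, hp]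
      rw [← hn] at h0
      calc ∑ i ∈ Finset.range (n + 1), ((p.coeff i : A) * a ^ i)
          = ∑ i ∈ Finset.range (n + 1), p.coeff i • a ^ i := by
            refine Finset.sum_congr rfl fun i _ => ?_
            rw [Algebra.smul_def]
            rfl
        _ = 0 := h0.symm
    have hyI : y ∈ I := by
      have : y = y - ∑ i ∈ Finset.range (n + 1), ((p.coeff i : A) * a ^ i) := by
        rw [haeval, sub_zero]
      rw [this, hy, ← Finset.sum_sub_distrib]
      refine Ideal.sum_mem _ fun i _ => ?_
      have : algebraMap R A (r (p.coeff i)) * a ^ i - (p.coeff i : A) * a ^ i =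
          -((((p.coeff i : A)) - algebraMap R A (r (p.coeff i))) * a ^ i) := by ring
      rw [this]
      exact I.neg_mem (I.mul_mem_right _ (hr (p.coeff i)))
    -- I is homogeneous
    have hIhom : I.IsHomogeneous 𝒜 :=
      Ideal.homogeneous_span 𝒜 (N : Set A) fun x hx => ⟨1, hN hx⟩
    have hprojI : GradedRing.proj 𝒜 n y ∈ I := by
      rw [GradedRing.proj_apply]
      exact hIhom n hyI
    -- compute the projection
    have hapow : ∀ i : ℕ, a ^ i ∈ 𝒜 i := by
      intro i
      have := SetLike.pow_mem_graded i ha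
      simpa using this
    have hmemi : ∀ i : ℕ, algebraMap R A (r (p.coeff i)) * a ^ i ∈ 𝒜 i := by
      intro i
      rw [← Algebra.smul_def]
      exact Submodule.smul_mem _ _ (hapow i)
    have hproj : GradedRing.proj 𝒜 n y = algebraMap R A (r (p.coeff n)) * a ^ n := by
      rw [hy, map_sum]
      rw [Finset.sum_eq_single n]
      · rw [GradedRing.proj_apply, DirectSum.decompose_of_mem_same 𝒜 (hmemi n)]
      · intro i _ hin
        rw [GradedRing.proj_apply, DirectSum.decompose_of_mem_ne 𝒜 (hmemi i) hin]
      · intro hcon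
        exact absurd (Finset.mem_range.2 (Nat.lt_succ_self n)) hcon
    -- conclude : a ^ n ∈ I
    refine ⟨n, ?_⟩
    have hco : (p.coeff n : A) = 1 := by
      rw [hn, Polynomial.Monic.coeff_natDegree hmonic]
      rfl
    have h1 : (1 : A) - algebraMap R A (r (p.coeff n)) ∈ I := by
      have := hr (p.coeff n)
      rwa [hco] at this
    have : a ^ n = algebraMap R A (r (p.coeff n)) * a ^ n +
        ((1 : A) - algebraMap R A (r (p.coeff n))) * a ^ n := by ring
    rw [this]
    exact I.add_mem (hproj ▸ hprojI) (I.mul_mem_right _ h1)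
end

section
/- Let Z → S be a finite morphism of noetherian schemes and φ : Z → ℚ a constructible function. For a specialization s ← t of geometric points of S, the derivatives satisfy ∑_{x ∈ Z_s} δ(φ)(x ← t) = δ(f_*φ)(s ← t), where f_*φ(s) = ∑_{x ∈ Z_s} φ(x). Consequently, φ is flat over S if and only if f_*φ is locally constant. -/
/-- Abstract form of Lemma 1.2.4 for a finite morphism `f : Z → S`: fix a
specialization `s ← t` of (geometric) points of `S`, and for each `x` in the fiber
`Z_s` let `M x` be the (finite) Milnor fiber over `t`, so that `Z_t` is the disjoint
union of the `M x`. Then `∑_{x ∈ Z_s} δ(φ)(x ← t) = δ(f_*φ)(s ← t)`, where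
`δ(φ)(x ← t) = φ x − ∑_{z ∈ M x} φ z` and `f_*φ(s) = ∑_{x ∈ Z_s} φ x`; consequently,
if `δ(φ) ≥ 0` on the fiber, then `δ(φ)` vanishes on the fiber if and only if
`f_*φ(s) = f_*φ(t)` (flatness of `φ` ⟺ local constancy of `f_*φ`). -/
theorem stmt13 {Z S : Type*} (f : Z → S) (φ : Z → ℚ) (s t : S)
    (hfs : (f ⁻¹' {s}).Finite) (hft : (f ⁻¹' {t}).Finite)
    (M : Z → Finset Z)
    (hMt : ∀ x ∈ hfs.toFinset, ∀ z ∈ M x, f z = t)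
    (hpart : ∀ z ∈ hft.toFinset, ∃! x, x ∈ hfs.toFinset ∧ z ∈ M x) :
    (∑ x ∈ hfs.toFinset, (φ x - ∑ z ∈ M x, φ z)
        = (∑ x ∈ hfs.toFinset, φ x) - (∑ z ∈ hft.toFinset, φ z)) ∧
    ((∀ x ∈ hfs.toFinset, 0 ≤ φ x - ∑ z ∈ M x, φ z) →
      ((∀ x ∈ hfs.toFinset, φ x - ∑ z ∈ M x, φ z = 0) ↔
        (∑ x ∈ hfs.toFinset, φ x = ∑ z ∈ hft.toFinset, φ z))) := by
  classical
  have hdisj : (hfs.toFinset : Set Z).PairwiseDisjoint M := by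
    intro x hx y hy hxy
    simp only [Finset.disjoint_left]
    intro z hzx hzy
    have hz : z ∈ hft.toFinset := by
      simp only [Set.Finite.mem_toFinset, Set.mem_preimage, Set.mem_singleton_iff]
      exact hMt x (by simpa using hx) z hzx
    obtain ⟨w, _, hw⟩ := hpart z hz
    exact hxy ((hw x ⟨by simpa using hx, hzx⟩).trans (hw y ⟨by simpa using hy, hzy⟩).symm)
  have hUnion : hfs.toFinset.biUnion M = hft.toFinset := by
    ext z
    simp only [Finset.mem_biUnion]
    constructor
    · rintro ⟨x, hx, hz⟩
      simp only [Set.Finite.mem_toFinset, Set.mem_preimage, Set.mem_singleton_iff]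
      exact hMt x hx z hz
    · intro hz
      obtain ⟨x, ⟨hx, hzx⟩, _⟩ := hpart z hz
      exact ⟨x, hx, hzx⟩
  have key : ∑ x ∈ hfs.toFinset, ∑ z ∈ M x, φ z = ∑ z ∈ hft.toFinset, φ z := by
    rw [← hUnion, Finset.sum_biUnion hdisj]
  have h1 : ∑ x ∈ hfs.toFinset, (φ x - ∑ z ∈ M x, φ z)
      = (∑ x ∈ hfs.toFinset, φ x) - (∑ z ∈ hft.toFinset, φ z) := by
    rw [Finset.sum_sub_distrib, key]
  refine ⟨h1, fun hpos => ?_⟩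
  constructor
  · intro hall
    have : ∑ x ∈ hfs.toFinset, (φ x - ∑ z ∈ M x, φ z) = 0 :=
      Finset.sum_eq_zero hall
    rw [h1] at this
    linarith
  · intro heq
    have h0 : ∑ x ∈ hfs.toFinset, (φ x - ∑ z ∈ M x, φ z) = 0 := by
      rw [h1]; linarith
    exact (Finset.sum_eq_zero_iff_of_nonneg hpos).mp h0
end
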